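/- arXiv:2012.14415 — 3 statements merged into one kernel-verified Lean document; each statement's English description precedes it below -/
import Mathlib

section
/- Let T ≥ 1 be an integer, α > 0, and let β(0), …, β(T−1) ∈ [0,1) and u : {0,…,T} → ℝ satisfy |u(t) − u(0) + Σ_{0≤s<t} β(s) u(s)| ≤ α for all t = 1,…,T. Then for all t = 1,…,T, |u(t) − u(0)·∏_{0≤s<t} (1 − β(s))| ≤ 2α − α·∏_{0≤s<t} (1 − β(s)) ≤ 2α. -/
open Finset

/-!
Write `v t = u t - u 0 + ∑_{s<t} β s u s` (so `|v t| ≤ α`) and `P t = ∏_{s<t} (1 - β s)`.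
The error `w t = u t - u 0 P t - v t` starts at `0` and satisfies
`w (t+1) = (1 - β t) w t + β t (-v t)`, a convex combination of `w t` and a quantity bounded
by `α`; hence `|w t| ≤ α (1 - P t)` by induction, and `|u t - u 0 P t| ≤ |w t| + |v t|`.
-/

theorem abs_le_mul_one_sub_prod_of_convex_step {b x w : ℕ → ℝ} {α : ℝ} {t : ℕ}
    (hw₀ : w 0 = 0) (hw : ∀ n < t, w (n + 1) = (1 - b n) * w n + b n * x n)
    (hb : ∀ n < t, b n ∈ Set.Icc (0 : ℝ) 1) (hx : ∀ n < t, |x n| ≤ α) :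
    |w t| ≤ α * (1 - ∏ n ∈ range t, (1 - b n)) := by
  induction t with
  | zero => simp [hw₀]
  | succ n ih =>
    have ih := ih (fun k hk => hw k (by omega)) (fun k hk => hb k (by omega))
      (fun k hk => hx k (by omega))
    obtain ⟨hb₀, hb₁⟩ := hb n n.lt_succ_self
    calc |w (n + 1)| = |(1 - b n) * w n + b n * x n| := by rw [hw n n.lt_succ_self]
      _ ≤ (1 - b n) * |w n| + b n * |x n| := by
        grw [abs_add_le, abs_mul, abs_mul, abs_of_nonneg (sub_nonneg.2 hb₁), abs_of_nonneg hb₀]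
      _ ≤ (1 - b n) * (α * (1 - ∏ k ∈ range n, (1 - b k))) + b n * α := by
        gcongr
        exact hx n n.lt_succ_self
      _ = α * (1 - ∏ k ∈ range (n + 1), (1 - b k)) := by rw [prod_range_succ]; ring

theorem reversed_gronwall_general (T : ℕ) (α : ℝ)
    (β u : ℕ → ℝ)
    (hβ : ∀ s, s < T → β s ∈ Set.Ico (0 : ℝ) 1)
    (h : ∀ t, 1 ≤ t → t ≤ T →
      |u t - u 0 + ∑ s ∈ Finset.range t, β s * u s| ≤ α) :
    ∀ t, 1 ≤ t → t ≤ T →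
      |u t - u 0 * ∏ s ∈ Finset.range t, (1 - β s)|
        ≤ 2 * α - α * ∏ s ∈ Finset.range t, (1 - β s) ∧
      2 * α - α * ∏ s ∈ Finset.range t, (1 - β s) ≤ 2 * α := by
  intro t ht₁ htT
  set v : ℕ → ℝ := fun n => u n - u 0 + ∑ s ∈ range n, β s * u s
  have hα : 0 ≤ α := (abs_nonneg _).trans (h t ht₁ htT)
  have hv : ∀ n ≤ T, |v n| ≤ α := by
    intro n hn
    rcases n.eq_zero_or_pos with rfl | hn₀
    · simpa [v] using hα
    · exact h n hn₀ hn
  have hw := abs_le_mul_one_sub_prod_of_convex_step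
    (w := fun n => u 0 * (1 - ∏ s ∈ range n, (1 - β s)) - ∑ s ∈ range n, β s * u s)
    (x := fun n => -v n) (t := t) (by simp)
    (fun n _ => by simp only [v, prod_range_succ, sum_range_succ]; ring)
    (fun n hn => Set.Ico_subset_Icc_self (hβ n (by omega)))
    (fun n hn => by simpa using hv n (by omega))
  have hP : 0 ≤ ∏ s ∈ range t, (1 - β s) :=
    prod_nonneg fun s hs => sub_nonneg.2 (hβ s (by simp at hs; omega)).2.le
  refine ⟨?_, sub_le_self _ (mul_nonneg hα hP)⟩
  calc |u t - u 0 * ∏ s ∈ range t, (1 - β s)|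
      = |(u 0 * (1 - ∏ s ∈ range t, (1 - β s)) - ∑ s ∈ range t, β s * u s) + v t| := by
        congr 1; simp only [v]; ring
    _ ≤ α * (1 - ∏ s ∈ range t, (1 - β s)) + α :=
        (abs_add_le _ _).trans (add_le_add hw (hv t htT))
    _ = 2 * α - α * ∏ s ∈ range t, (1 - β s) := by ring

/-- A discrete reversed Gronwall-type inequality. -/
theorem reversed_gronwall (T : ℕ) (hT : 1 ≤ T) (α : ℝ) (hα : 0 < α)
    (β u : ℕ → ℝ)
    (hβ : ∀ s, s < T → β s ∈ Set.Ico (0 : ℝ) 1)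
    (h : ∀ t, 1 ≤ t → t ≤ T →
      |u t - u 0 + ∑ s ∈ Finset.range t, β s * u s| ≤ α) :
    ∀ t, 1 ≤ t → t ≤ T →
      |u t - u 0 * ∏ s ∈ Finset.range t, (1 - β s)|
        ≤ 2 * α - α * ∏ s ∈ Finset.range t, (1 - β s) ∧
      2 * α - α * ∏ s ∈ Finset.range t, (1 - β s) ≤ 2 * α :=
  reversed_gronwall_general T α β u hβ h
end

section
/- There exists an absolute constant C′ ≤ 3.3359 such that for every integrable real-valued random variable X, ‖X − E X‖_{ψ_{1/2}} ≤ C′ · ‖X‖_{ψ_{1/2}}. -/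
/-!
If `E exp √(|X|/k) ≤ 2`, then `exp √u ≥ 1 + 1.484 u` gives `E|X| ≤ 0.674 k`, hence
`|X - E X| ≤ |X| + 0.674 k`. With `s = √(|X|/k)`, the elementary inequality
`exp √((s² + 0.674)/3.3359) ≤ 5/4 + (3/8) exp s` then yields
`E exp √(|X - E X|/(3.3359 k)) ≤ 5/4 + (3/8)·2 = 2`, and `k` ranges over the admissible
constants of `X`.
-/

open MeasureTheory

/-- The Orlicz `ψ_β`-norm of a real random variable, valued in `ℝ≥0∞`
(`⊤` if no finite constant works):
`‖Z‖_{ψ_β} = inf { K > 0 : E exp(|Z|^β / K^β) ≤ 2 }`. -/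
noncomputable def psiNorm {Ω : Type*} [MeasurableSpace Ω] (μ : Measure Ω) (β : ℝ)
    (Z : Ω → ℝ) : ENNReal :=
  sInf {K : ENNReal | ∃ k : ℝ, 0 < k ∧ K = ENNReal.ofReal k ∧
    ∫ ω, Real.exp (|Z ω| ^ β / k ^ β) ∂μ ≤ 2}

open Real

lemma exp_le_of_taylor_le {x U : ℝ} (n : ℕ) (hn : 0 < n) (hx₀ : 0 ≤ x) (hx₁ : x ≤ 1)
    (h : ∑ m ∈ Finset.range n, x ^ m / m.factorial + x ^ n * (n + 1) / (n.factorial * n) ≤ U) :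
    exp x ≤ U :=
  (exp_bound' hx₀ hx₁ hn).trans h

lemma le_exp_of_le_taylor {x L : ℝ} (n : ℕ) (hx : 0 ≤ x)
    (h : L ≤ ∑ m ∈ Finset.range n, x ^ m / m.factorial) : L ≤ exp x :=
  h.trans (sum_le_exp_of_nonneg hx n)

lemma exp_le_one_add_add_sq {x : ℝ} (hx₀ : 0 ≤ x) (hx₁ : x ≤ 1) :
    exp x ≤ 1 + x + 3 / 4 * x ^ 2 :=
  exp_le_of_taylor_le 2 two_pos hx₀ hx₁ (le_of_eq (by norm_num [Finset.sum_range_succ]; ring))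

/-- Second-order Taylor expansions of both sides at `p`, compared coefficientwise. -/
lemma exp_affine_le_add_mul_exp {p q a b L M α β s : ℝ} (hps : p ≤ s) (hsq : s ≤ q)
    (ha : 0 ≤ a) (haq : a * (q - p) ≤ 1) (hβ : 0 ≤ β) (hL : exp (a * p + b) ≤ L)
    (hM : M ≤ exp p) (h₀ : L ≤ α + β * M) (h₁ : L * a ≤ β * M) (h₂ : 3 / 2 * L * a ^ 2 ≤ β * M) :
    exp (a * s + b) ≤ α + β * exp s := by
  set r := s - p
  have hr : 0 ≤ r := sub_nonneg.2 hps
  have har : a * r ≤ 1 := (mul_le_mul_of_nonneg_left (by simp only [r]; linarith) ha).trans haq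
  have hupper : exp (a * s + b) ≤ L * (1 + a * r + 3 / 4 * (a * r) ^ 2) := by
    rw [show a * s + b = (a * p + b) + a * r by ring, exp_add]
    exact mul_le_mul hL (exp_le_one_add_add_sq (mul_nonneg ha hr) har) (exp_pos _).le
      ((exp_pos _).le.trans hL)
  have hlower : M * (1 + r + r ^ 2 / 2) ≤ exp s := by
    rw [show s = p + r by ring, exp_add]
    exact mul_le_mul hM (quadratic_le_exp_of_nonneg hr) (by positivity) (exp_pos _).le
  nlinarith [mul_nonneg (sub_nonneg.2 h₁) hr, mul_nonneg (sub_nonneg.2 h₂) (sq_nonneg r),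
    mul_le_mul_of_nonneg_left hlower hβ]

lemma exp_affine_le_mul_exp {a b d β s : ℝ} (hd : d ≤ (1 - a) * s - b) (hβ : 1 ≤ β * exp d) :
    exp (a * s + b) ≤ β * exp s := by
  calc exp (a * s + b) ≤ exp (s - d) := exp_le_exp.2 (by linarith)
    _ = exp s / exp d := exp_sub s d
    _ ≤ β * exp s := by
      rw [div_le_iff₀ (exp_pos d)]
      nlinarith [exp_pos s]

/-- A concave quadratic that is nonnegative at both endpoints is nonnegative in between. -/
lemma div_le_sq_of_endpoints {p q a b c C s : ℝ} (hC : 0 < C) (hps : p ≤ s) (hsq : s ≤ q)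
    (ha : a ^ 2 * C ≤ 1) (hp : (p ^ 2 + c) / C ≤ (a * p + b) ^ 2)
    (hq : (q ^ 2 + c) / C ≤ (a * q + b) ^ 2) : (s ^ 2 + c) / C ≤ (a * s + b) ^ 2 := by
  rw [div_le_iff₀ hC] at *
  rcases hps.eq_or_lt with rfl | hps'
  · exact hp
  have key : (q - p) * ((a * s + b) ^ 2 * C - (s ^ 2 + c)) =
      (q - s) * ((a * p + b) ^ 2 * C - (p ^ 2 + c)) + (s - p) * ((a * q + b) ^ 2 * C - (q ^ 2 + c))
        + (1 - a ^ 2 * C) * (s - p) * (q - s) * (q - p) := by ring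
  have hpq : 0 < q - p := sub_pos.2 (hps'.trans_le hsq)
  have hnonneg : 0 ≤ (q - p) * ((a * s + b) ^ 2 * C - (s ^ 2 + c)) := by
    rw [key]
    have hsp := sub_nonneg.2 hps
    have hqs := sub_nonneg.2 hsq
    exact add_nonneg
      (add_nonneg (mul_nonneg hqs (sub_nonneg.2 hp)) (mul_nonneg hsp (sub_nonneg.2 hq)))
      (mul_nonneg (mul_nonneg (mul_nonneg (sub_nonneg.2 ha) hsp) hqs) hpq.le)
  exact sub_nonneg.1 ((mul_nonneg_iff_of_pos_left hpq).1 hnonneg)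

lemma exp_sqrt_sq_add_div_le_of_chord {p q a b L M s : ℝ} (hp : 0 ≤ p) (hps : p ≤ s)
    (hsq : s ≤ q) (hL : exp (a * p + b) ≤ L) (hM : M ≤ exp p) (ha : 0 ≤ a) (hb : 0 ≤ b)
    (ha_sq : a ^ 2 * 3.3359 ≤ 1) (hchord_p : (p ^ 2 + 0.674) / 3.3359 ≤ (a * p + b) ^ 2)
    (hchord_q : (q ^ 2 + 0.674) / 3.3359 ≤ (a * q + b) ^ 2) (haq : a * (q - p) ≤ 1)
    (h₀ : L ≤ 5 / 4 + 3 / 8 * M) (h₁ : L * a ≤ 3 / 8 * M) (h₂ : 3 / 2 * L * a ^ 2 ≤ 3 / 8 * M) :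
    exp √((s ^ 2 + 0.674) / 3.3359) ≤ 5 / 4 + 3 / 8 * exp s := by
  have hchord := div_le_sq_of_endpoints (by norm_num) hps hsq ha_sq hchord_p hchord_q
  have hab : 0 ≤ a * s + b := by have := hp.trans hps; positivity
  calc exp √((s ^ 2 + 0.674) / 3.3359) ≤ exp (a * s + b) :=
        exp_le_exp.2 ((sqrt_le_left hab).2 hchord)
    _ ≤ 5 / 4 + 3 / 8 * exp s :=
      exp_affine_le_add_mul_exp hps hsq ha haq (by norm_num) hL hM h₀ h₁ h₂

/-- On `[0, 3.2]` the convex left side is bounded through its chords over `[0, 0.8]`,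
`[0.8, 1.5]` and `[1.5, 3.2]`, with coefficients rounded up. -/
lemma exp_sqrt_sq_add_div_le {s : ℝ} (hs : 0 ≤ s) :
    exp √((s ^ 2 + 0.674) / 3.3359) ≤ 5 / 4 + 3 / 8 * exp s := by
  rcases le_total s 0.8 with h₁ | h₁
  · refine exp_sqrt_sq_add_div_le_of_chord (a := 0.2227) (b := 0.4495) (L := 1.5676) (M := 1)
      le_rfl hs h₁
      (exp_le_of_taylor_le 6 (by norm_num) (by norm_num) (by norm_num)
        (by norm_num [Finset.sum_range_succ, Nat.factorial]))
      (by norm_num) ?_ ?_ ?_ ?_ ?_ ?_ ?_ ?_ ?_ <;> norm_num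
  rcases le_total s 1.5 with h₂ | h₂
  · refine exp_sqrt_sq_add_div_le_of_chord (a := 0.4409) (b := 0.2750) (L := 1.8734) (M := 2.2255)
      (by norm_num) h₁ h₂
      (exp_le_of_taylor_le 7 (by norm_num) (by norm_num) (by norm_num)
        (by norm_num [Finset.sum_range_succ, Nat.factorial]))
      (le_exp_of_le_taylor 10 (by norm_num) (by norm_num [Finset.sum_range_succ, Nat.factorial]))
      ?_ ?_ ?_ ?_ ?_ ?_ ?_ ?_ ?_ <;> norm_num
  rcases le_total s 3.2 with h₃ | h₃
  · refine exp_sqrt_sq_add_div_le_of_chord (a := 0.5133) (b := 0.1664) (L := 2.551) (M := 4.4816)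
      (by norm_num) h₂ h₃
      (exp_le_of_taylor_le 8 (by norm_num) (by norm_num) (by norm_num)
        (by norm_num [Finset.sum_range_succ, Nat.factorial]))
      (le_exp_of_le_taylor 12 (by norm_num) (by norm_num [Finset.sum_range_succ, Nat.factorial]))
      ?_ ?_ ?_ ?_ ?_ ?_ ?_ ?_ ?_ <;> norm_num
  -- `√(s² + 0.674) ≤ s + √0.674`, and beyond `3.2` the term `3/8 * exp s` alone suffices
  have hchord : (s ^ 2 + 0.674) / 3.3359 ≤ (0.5476 * s + 0.4495) ^ 2 := by
    rw [div_le_iff₀ (by norm_num)]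
    nlinarith
  have he : 8 / 3 ≤ exp 0.99 :=
    le_exp_of_le_taylor 12 (by norm_num) (by norm_num [Finset.sum_range_succ, Nat.factorial])
  calc exp √((s ^ 2 + 0.674) / 3.3359) ≤ exp (0.5476 * s + 0.4495) :=
        exp_le_exp.2 ((sqrt_le_left (by positivity)).2 hchord)
    _ ≤ 3 / 8 * exp s := exp_affine_le_mul_exp (d := 0.99) (by linarith) (by linarith)
    _ ≤ 5 / 4 + 3 / 8 * exp s := by linarith

lemma one_add_mul_le_exp_sqrt {u : ℝ} (hu : 0 ≤ u) : 1 + 1.484 * u ≤ exp √u := by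
  obtain ⟨s, hs, rfl⟩ : ∃ s, 0 ≤ s ∧ s ^ 2 = u := ⟨√u, sqrt_nonneg u, sq_sqrt hu⟩
  have h := le_exp_of_le_taylor 5 hs le_rfl
  norm_num [Finset.sum_range_succ, Nat.factorial] at h
  rw [sqrt_sq hs]
  nlinarith [mul_nonneg hs (sq_nonneg (s - 2)), sq_nonneg (s - 1.73)]

lemma exp_sqrt_abs_sub_div_le {x m k : ℝ} (hk : 0 < k) (hm : |m| ≤ 0.674 * k) :
    exp √(|x - m| / (3.3359 * k)) ≤ 5 / 4 + 3 / 8 * exp √(|x| / k) := by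
  have hs : √(|x| / k) ^ 2 = |x| / k := sq_sqrt (by positivity)
  have harg : |x - m| / (3.3359 * k) ≤ (√(|x| / k) ^ 2 + 0.674) / 3.3359 := by
    rw [hs, show (|x| / k + 0.674) / 3.3359 = (|x| + 0.674 * k) / (3.3359 * k) by field_simp]
    gcongr
    linarith [abs_sub x m]
  exact (exp_le_exp.2 (sqrt_le_sqrt harg)).trans (exp_sqrt_sq_add_div_le (sqrt_nonneg _))

lemma sqrt_add_le_sqrt_add_sqrt {a b : ℝ} (ha : 0 ≤ a) (hb : 0 ≤ b) : √(a + b) ≤ √a + √b := by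
  rw [sqrt_le_left (by positivity), add_sq, sq_sqrt ha, sq_sqrt hb]
  nlinarith [sqrt_nonneg a, sqrt_nonneg b]

lemma exp_sqrt_abs_div_le_mul (x m : ℝ) {k : ℝ} (hk : 0 ≤ k) :
    exp √(|x| / k) ≤ exp √(|m| / k) * exp √(|x - m| / k) := by
  rw [← exp_add, exp_le_exp]
  calc √(|x| / k) ≤ √(|m| / k + |x - m| / k) := by
        rw [← add_div]
        gcongr
        linarith [abs_sub_abs_le_abs_sub x m]
    _ ≤ √(|m| / k) + √(|x - m| / k) := sqrt_add_le_sqrt_add_sqrt (by positivity) (by positivity)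

section PsiNorm

variable {Ω : Type*} [MeasurableSpace Ω] {μ : Measure Ω} {X : Ω → ℝ} {k : ℝ}

lemma rpow_half_div_rpow_half {x : ℝ} (hx : 0 ≤ x) (k : ℝ) :
    x ^ (1 / 2 : ℝ) / k ^ (1 / 2 : ℝ) = √(x / k) := by
  rw [sqrt_div hx, sqrt_eq_rpow, sqrt_eq_rpow]

lemma psiNorm_half_le_ofReal {Z : Ω → ℝ} (hk : 0 < k)
    (h : ∫ ω, exp √(|Z ω| / k) ∂μ ≤ 2) : psiNorm μ (1 / 2) Z ≤ ENNReal.ofReal k :=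
  sInf_le ⟨k, hk, rfl, by simpa only [rpow_half_div_rpow_half (abs_nonneg _)] using h⟩

lemma psiNorm_le_ofReal_mul {β c : ℝ} {Y Z : Ω → ℝ} (hc : 0 < c)
    (h : ∀ k, 0 < k → ∫ ω, exp (|Z ω| ^ β / k ^ β) ∂μ ≤ 2 →
      psiNorm μ β Y ≤ ENNReal.ofReal (c * k)) :
    psiNorm μ β Y ≤ ENNReal.ofReal c * psiNorm μ β Z := by
  have hc₀ : ENNReal.ofReal c ≠ 0 := ENNReal.ofReal_pos.2 hc |>.ne'
  rw [mul_comm, ← ENNReal.div_le_iff_le_mul (Or.inl hc₀) (Or.inl ENNReal.ofReal_ne_top)]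
  refine le_sInf ?_
  rintro _ ⟨k, hk, rfl, hint⟩
  rw [ENNReal.div_le_iff_le_mul (Or.inl hc₀) (Or.inl ENNReal.ofReal_ne_top),
    ← ENNReal.ofReal_mul hk.le, mul_comm]
  exact h k hk hint

lemma not_integrable_exp_sqrt_abs_sub (hX : AEStronglyMeasurable X μ) (hk : 0 ≤ k) (m : ℝ)
    (hf : ¬Integrable (fun ω => exp √(|X ω| / k)) μ) :
    ¬Integrable (fun ω => exp √(|X ω - m| / k)) μ := fun hg =>
  hf <| (hg.const_mul (exp √(|m| / k))).mono' (by fun_prop) <| ae_of_all _ fun ω => by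
    rw [norm_of_nonneg (exp_pos _).le]
    exact exp_sqrt_abs_div_le_mul _ _ hk

variable [IsProbabilityMeasure μ]

lemma integral_abs_le_of_integral_exp_sqrt_le (hX : Integrable X μ) (hk : 0 < k)
    (hf : Integrable (fun ω => exp √(|X ω| / k)) μ) (h : ∫ ω, exp √(|X ω| / k) ∂μ ≤ 2) :
    ∫ ω, |X ω| ∂μ ≤ 0.674 * k := by
  have hlin : Integrable (fun ω => 1.484 * (|X ω| / k)) μ := (hX.abs.div_const k).const_mul _
  have hmono : ∫ ω, (1 + 1.484 * (|X ω| / k)) ∂μ ≤ ∫ ω, exp √(|X ω| / k) ∂μ :=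
    integral_mono ((integrable_const 1).add hlin) hf
      fun ω => one_add_mul_le_exp_sqrt (div_nonneg (abs_nonneg (X ω)) hk.le)
  rw [integral_add (integrable_const 1) hlin, integral_const_mul, integral_div] at hmono
  simp only [integral_const, probReal_univ, smul_eq_mul, one_mul] at hmono
  exact (div_le_iff₀ hk).1 (by linarith)

lemma psiNorm_half_sub_integral_le (hX : Integrable X μ) (hk : 0 < k)
    (h : ∫ ω, exp √(|X ω| / k) ∂μ ≤ 2) :
    psiNorm μ (1 / 2) (fun ω => X ω - ∫ x, X x ∂μ) ≤ ENNReal.ofReal (3.3359 * k) := by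
  set m := ∫ x, X x ∂μ
  by_cases hf : Integrable (fun ω => exp √(|X ω| / k)) μ
  · have hm : |m| ≤ 0.674 * k :=
      abs_integral_le_integral_abs.trans (integral_abs_le_of_integral_exp_sqrt_le hX hk hf h)
    have hdom : Integrable (fun ω => 5 / 4 + 3 / 8 * exp √(|X ω| / k)) μ :=
      (integrable_const _).add (hf.const_mul _)
    have hpt (ω : Ω) : exp √(|X ω - m| / (3.3359 * k)) ≤ 5 / 4 + 3 / 8 * exp √(|X ω| / k) :=
      exp_sqrt_abs_sub_div_le hk hm
    have hg : Integrable (fun ω => exp √(|X ω - m| / (3.3359 * k))) μ :=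
      hdom.mono' (by fun_prop) <| ae_of_all _ fun ω => by
        rw [norm_of_nonneg (exp_pos _).le]
        exact hpt ω
    refine psiNorm_half_le_ofReal (by positivity) ?_
    calc ∫ ω, exp √(|X ω - m| / (3.3359 * k)) ∂μ
        ≤ ∫ ω, (5 / 4 + 3 / 8 * exp √(|X ω| / k)) ∂μ := integral_mono hg hdom hpt
      _ = 5 / 4 + 3 / 8 * ∫ ω, exp √(|X ω| / k) ∂μ := by
        rw [integral_add (integrable_const _) (hf.const_mul _), integral_const_mul]
        simp
      _ ≤ 2 := by linarith
  · -- the Bochner integral of a non-integrable function is `0`, so `k` itself qualifies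
    have hg := not_integrable_exp_sqrt_abs_sub hX.aestronglyMeasurable hk.le m hf
    calc psiNorm μ (1 / 2) (fun ω => X ω - m) ≤ ENNReal.ofReal k :=
          psiNorm_half_le_ofReal hk (by rw [integral_undef hg]; norm_num)
      _ ≤ ENNReal.ofReal (3.3359 * k) := ENNReal.ofReal_le_ofReal (by linarith)

end PsiNorm

/-- The `ψ_{1/2}`-norm of the centered variable `X - E X` is bounded by a universal
constant `C ≤ 3.3359` times the `ψ_{1/2}`-norm of `X`. -/
theorem psiNorm_half_centering_le :
    ∃ C : ℝ, 0 < C ∧ C ≤ 3.3359 ∧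
      ∀ (Ω : Type) (_ : MeasurableSpace Ω) (μ : Measure Ω), IsProbabilityMeasure μ →
        ∀ (X : Ω → ℝ), Measurable X → Integrable X μ →
          psiNorm μ (1 / 2) (fun ω => X ω - ∫ x, X x ∂μ)
            ≤ ENNReal.ofReal C * psiNorm μ (1 / 2) X := by
  refine ⟨3.3359, by norm_num, le_rfl, fun Ω _ μ _ X _ hX => ?_⟩
  refine psiNorm_le_ofReal_mul (by norm_num) fun k hk h => ?_
  exact psiNorm_half_sub_integral_le hX hk
    (by simpa only [rpow_half_div_rpow_half (abs_nonneg _)] using h)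
end

section
/- For the standard Gaussian CDF Φ and all y ∈ [1 − 1/√(2πe), 1): Φ^{−1}((y+1)/2) ≤ √(2 log(√2/(√π (1−y)))), and Φ^{−1}((y+1)/2) ≥ √(2 log(√2/(√π(1−y))) − log log(√2/(√π(1−y))) − 3 log 2), provided the expression under the square root is nonnegative. -/
open MeasureTheory ProbabilityTheory

/-- The standard Gaussian cumulative distribution function `Φ`. -/
noncomputable def stdGaussCDF (x : ℝ) : ℝ :=
  ((gaussianReal 0 1) (Set.Iic x)).toReal

/-!
With `Q = 1 - Φ` and `L = log (√2 / (√π (1 - y)))` we have `Q x = (1 - y) / 2 = φ (√(2L))`, and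
the argument only compares `Q` with the density `φ` through the Mills-ratio bounds
`t φ t / (t² + 1) ≤ Q t ≤ φ t / t` (`t ≥ 1`), both obtained by integrating an explicit
antiderivative, together with strict monotonicity of `Q`.
Upper bound: `Q (√(2L)) ≤ φ (√(2L)) / √(2L) < Q x`.
Lower bound: at `s = √(2L - log L - 3 log 2)` one has `φ s = √(8L) · Q x`, so for `s > 1`,
`Q s > φ s / (2s) ≥ Q x`. The hypothesis on `y` says `L ≥ log 2 + 1/2`, which is exactly what
makes `Q x ≤ φ 1 / 2 ≤ Q 1`, i.e. `x ≥ 1`, and settles the case `s ≤ 1`.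
-/

open Real Filter Set Topology

local notation "φ" => gaussianPDFReal 0 1

lemma gaussianPDFReal_zero_one (t : ℝ) : φ t = (√(2 * π))⁻¹ * exp (-t ^ 2 / 2) := by
  simp [gaussianPDFReal_def]

lemma hasDerivAt_gaussianPDFReal_zero_one (t : ℝ) : HasDerivAt φ (-(t * φ t)) t := by
  have h : HasDerivAt (fun u : ℝ => -u ^ 2 / 2) (-t) t :=
    ((hasDerivAt_pow 2 t).fun_neg.div_const 2).congr_deriv (by ring)
  rw [funext gaussianPDFReal_zero_one]
  exact (h.exp.const_mul (√(2 * π))⁻¹).congr_deriv (by ring)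

lemma tendsto_gaussianPDFReal_zero_one_atTop : Tendsto φ atTop (𝓝 0) := by
  have h : Tendsto (fun t : ℝ => -t ^ 2 / 2) atTop atBot := by
    simpa [neg_div] using
      (tendsto_pow_atTop (α := ℝ) two_ne_zero).atTop_div_const (two_pos : (0 : ℝ) < 2)
  simpa [funext gaussianPDFReal_zero_one] using
    (tendsto_exp_atBot.comp h).const_mul (√(2 * π))⁻¹

noncomputable def stdGaussTail (x : ℝ) : ℝ := ∫ t in Ioi x, φ t

lemma stdGaussCDF_add_stdGaussTail (x : ℝ) : stdGaussCDF x + stdGaussTail x = 1 := by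
  have hint := integrable_gaussianPDFReal 0 1
  rw [stdGaussCDF, stdGaussTail, gaussianReal_apply_eq_integral 0 one_ne_zero,
    ENNReal.toReal_ofReal (setIntegral_nonneg measurableSet_Iic fun t _ =>
      (gaussianPDFReal_nonneg 0 1 t)),
    ← setIntegral_union (Iic_disjoint_Ioi le_rfl) measurableSet_Ioi hint.integrableOn
      hint.integrableOn, Iic_union_Ioi, setIntegral_univ,
    integral_gaussianPDFReal_eq_one 0 one_ne_zero]

lemma stdGaussTail_strictAnti : StrictAnti stdGaussTail := by
  intro a b hab
  have hint := integrable_gaussianPDFReal 0 1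
  have hsplit : stdGaussTail a = (∫ t in Ioc a b, φ t) + stdGaussTail b := by
    rw [stdGaussTail, stdGaussTail, ← Ioc_union_Ioi_eq_Ioi hab.le,
      setIntegral_union Ioc_disjoint_Ioi_same measurableSet_Ioi hint.integrableOn
        hint.integrableOn]
  have hpos : 0 < ∫ t in Ioc a b, φ t := by
    rw [setIntegral_pos_iff_support_of_nonneg_ae
      (ae_of_all _ (gaussianPDFReal_nonneg 0 1)) hint.integrableOn,
      show Function.support φ = univ from
        eq_univ_of_forall fun t => (gaussianPDFReal_pos 0 1 t one_ne_zero).ne']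
    simpa using hab
  linarith

lemma integral_Ioi_mul_gaussianPDFReal_zero_one {x : ℝ} (hx : 0 ≤ x) :
    IntegrableOn (fun t => t * φ t) (Ioi x) ∧ ∫ t in Ioi x, t * φ t = φ x := by
  have hderiv (t : ℝ) : HasDerivAt (fun u => -φ u) (t * φ t) t :=
    (hasDerivAt_gaussianPDFReal_zero_one t).fun_neg.congr_deriv (neg_neg _)
  have hnonneg (t : ℝ) (ht : t ∈ Ioi x) : 0 ≤ t * φ t :=
    mul_nonneg (hx.trans (le_of_lt ht)) (gaussianPDFReal_nonneg 0 1 t)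
  have hlim : Tendsto (fun u => -φ u) atTop (𝓝 0) := by
    simpa using tendsto_gaussianPDFReal_zero_one_atTop.neg
  refine ⟨integrableOn_Ioi_deriv_of_nonneg' (fun t _ => hderiv t) hnonneg hlim, ?_⟩
  simpa using integral_Ioi_of_hasDerivAt_of_nonneg' (fun t _ => hderiv t) hnonneg hlim

lemma stdGaussTail_le_div {x : ℝ} (hx : 0 < x) : stdGaussTail x ≤ φ x / x := by
  obtain ⟨hint, heq⟩ := integral_Ioi_mul_gaussianPDFReal_zero_one hx.le
  calc stdGaussTail x ≤ ∫ t in Ioi x, x⁻¹ * (t * φ t) := by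
        refine setIntegral_mono_on (integrable_gaussianPDFReal 0 1).integrableOn
          (hint.const_mul x⁻¹) measurableSet_Ioi fun t ht => ?_
        rw [← mul_assoc]
        exact le_mul_of_one_le_left (gaussianPDFReal_nonneg 0 1 t)
          ((one_le_inv_mul₀ hx).2 (le_of_lt ht))
    _ = φ x / x := by rw [integral_const_mul, heq, inv_mul_eq_div]

lemma hasDerivAt_neg_div_sq_add_one_mul_gaussianPDFReal (t : ℝ) :
    HasDerivAt (fun u => -(u / (u ^ 2 + 1) * φ u)) (φ t * (1 - 2 / (t ^ 2 + 1) ^ 2)) t := by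
  have ht : t ^ 2 + 1 ≠ 0 := by positivity
  have hrat : HasDerivAt (fun u : ℝ => u / (u ^ 2 + 1))
      ((1 * (t ^ 2 + 1) - t * (2 * t)) / (t ^ 2 + 1) ^ 2) t :=
    ((hasDerivAt_id' t).fun_div ((hasDerivAt_pow 2 t).add_const 1) ht).congr_deriv
      (by norm_num)
  refine (hrat.fun_mul (hasDerivAt_gaussianPDFReal_zero_one t)).fun_neg.congr_deriv ?_
  field_simp
  ring

lemma div_sq_add_one_mul_le_stdGaussTail {x : ℝ} (hx : 1 ≤ x) :
    x / (x ^ 2 + 1) * φ x ≤ stdGaussTail x := by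
  have hderiv (t : ℝ) (_ : t ∈ Ici x) := hasDerivAt_neg_div_sq_add_one_mul_gaussianPDFReal t
  have hnonneg (t : ℝ) (ht : t ∈ Ioi x) : 0 ≤ φ t * (1 - 2 / (t ^ 2 + 1) ^ 2) := by
    have ht1 : 1 ≤ t := hx.trans (le_of_lt ht)
    refine mul_nonneg (gaussianPDFReal_nonneg 0 1 t) (sub_nonneg.2 ?_)
    rw [div_le_one (by positivity)]
    nlinarith
  have hlim : Tendsto (fun u => -(u / (u ^ 2 + 1) * φ u)) atTop (𝓝 0) := by
    have h : Tendsto (fun u => u / (u ^ 2 + 1) * φ u) atTop (𝓝 0) := by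
      refine squeeze_zero' ?_ ?_ tendsto_gaussianPDFReal_zero_one_atTop
      · filter_upwards [eventually_ge_atTop 0] with t ht
        exact mul_nonneg (by positivity) (gaussianPDFReal_nonneg 0 1 t)
      · filter_upwards [eventually_ge_atTop 0] with t ht
        refine mul_le_of_le_one_left (gaussianPDFReal_nonneg 0 1 t) ?_
        rw [div_le_one (by positivity)]
        nlinarith
    simpa using h.neg
  have heq := integral_Ioi_of_hasDerivAt_of_nonneg' hderiv hnonneg hlim
  rw [zero_sub, neg_neg] at heq
  rw [← heq]
  refine setIntegral_mono_on (integrableOn_Ioi_deriv_of_nonneg' hderiv hnonneg hlim)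
    (integrable_gaussianPDFReal 0 1).integrableOn measurableSet_Ioi fun t _ => ?_
  exact mul_le_of_le_one_right (gaussianPDFReal_nonneg 0 1 t)
    (sub_le_self _ (by positivity))

lemma gaussianPDFReal_zero_one_sqrt {a : ℝ} (ha : 0 ≤ a) :
    φ √a = (√(2 * π))⁻¹ * exp (-a / 2) := by
  rw [gaussianPDFReal_zero_one, sq_sqrt ha]

lemma one_le_of_stdGaussTail_eq {x L : ℝ} (hL : log 2 + 1 / 2 ≤ L)
    (hx : stdGaussTail x = (√(2 * π))⁻¹ * exp (-L)) : 1 ≤ x := by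
  have hφ1 : φ 1 / 2 ≤ stdGaussTail 1 := by
    simpa [div_eq_inv_mul, one_add_one_eq_two] using div_sq_add_one_mul_le_stdGaussTail le_rfl
  refine stdGaussTail_strictAnti.le_iff_ge.1 (le_trans ?_ hφ1)
  rw [hx, gaussianPDFReal_zero_one, mul_div_assoc]
  gcongr
  calc exp (-L) ≤ exp (-(log 2 + 1 / 2)) := exp_le_exp.2 (by linarith)
    _ = exp (-1 ^ 2 / 2) / 2 := by rw [neg_add, exp_add, exp_neg, exp_log two_pos]; ring_nf

lemma le_sqrt_of_stdGaussTail_eq {x L : ℝ} (hL : 1 / 2 < L)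
    (hx : stdGaussTail x = (√(2 * π))⁻¹ * exp (-L)) : x ≤ √(2 * L) := by
  have hu : 1 < √(2 * L) := by rw [lt_sqrt zero_le_one]; linarith
  have hφu : φ √(2 * L) = stdGaussTail x := by
    rw [gaussianPDFReal_zero_one_sqrt (by linarith), hx, neg_div,
      mul_div_cancel_left₀ _ two_ne_zero]
  refine (stdGaussTail_strictAnti.lt_iff_gt.1 ?_).le
  calc stdGaussTail √(2 * L) ≤ φ √(2 * L) / √(2 * L) := stdGaussTail_le_div (by linarith)
    _ < φ √(2 * L) := div_lt_self (gaussianPDFReal_pos 0 1 _ one_ne_zero) hu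
    _ = stdGaussTail x := hφu

lemma sqrt_le_of_stdGaussTail_eq {x L : ℝ} (hL : log 2 + 1 / 2 ≤ L)
    (hx : stdGaussTail x = (√(2 * π))⁻¹ * exp (-L)) :
    √(2 * L - log L - 3 * log 2) ≤ x := by
  have hlog2 : 0 < log 2 := log_pos one_lt_two
  set D := 2 * L - log L - 3 * log 2
  set s := √D
  rcases le_or_gt s 1 with hs | hs
  · exact hs.trans (one_le_of_stdGaussTail_eq hL hx)
  have hD : 0 < D := sqrt_pos.1 (zero_lt_one.trans hs)
  have hlog8L : log (8 * L) = log L + 3 * log 2 := by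
    rw [log_mul (by norm_num) (by linarith), show (8 : ℝ) = 2 ^ 3 by norm_num, log_pow]
    push_cast; ring
  have hφs : φ s = √(8 * L) * stdGaussTail x := by
    rw [gaussianPDFReal_zero_one_sqrt hD.le, hx,
      show -D / 2 = -L + log (8 * L) / 2 by rw [hlog8L]; ring, exp_add, exp_half,
      exp_log (by linarith)]
    ring
  have hs8L : 2 * s ≤ √(8 * L) := by
    rw [le_sqrt (by positivity) (by linarith), mul_pow, sq_sqrt hD.le]
    have : 0 ≤ log (8 * L) := log_nonneg (by linarith)
    linarith
  refine (stdGaussTail_strictAnti.lt_iff_gt.1 ?_).le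
  have hQx : 0 ≤ stdGaussTail x := hx ▸ by positivity
  calc stdGaussTail x ≤ φ s / (2 * s) := by
        rw [hφs, le_div_iff₀ (by positivity), mul_comm]
        gcongr
    _ < s / (s ^ 2 + 1) * φ s := by
        rw [div_mul_eq_mul_div, div_lt_div_iff₀ (by positivity) (by positivity)]
        have := gaussianPDFReal_pos 0 1 s one_ne_zero
        nlinarith [mul_pos this (show 0 < s ^ 2 - 1 by nlinarith)]
    _ ≤ stdGaussTail s := div_sq_add_one_mul_le_stdGaussTail hs.le

lemma log_two_add_half_le_log {r : ℝ} (hr : 0 < r) (h : r ≤ 1 / √(2 * π * exp 1)) :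
    log 2 + 1 / 2 ≤ log (√2 / (√π * r)) := by
  have hsqrt : √(2 * π * exp 1) = √2 * √π * exp (1 / 2) := by
    rw [sqrt_mul (by positivity), sqrt_mul zero_le_two, exp_half]
  rw [hsqrt, le_div_iff₀ (by positivity)] at h
  rw [le_log_iff_exp_le (by positivity), exp_add, exp_log two_pos,
    le_div_iff₀ (by positivity)]
  calc 2 * exp (1 / 2) * (√π * r) = √2 * (r * (√2 * √π * exp (1 / 2))) := by
        linear_combination (-(exp (1 / 2) * √π * r)) * mul_self_sqrt (zero_le_two (α := ℝ))
    _ ≤ √2 := by nlinarith [sqrt_nonneg 2]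

/-- Two-sided bounds on the Gaussian quantile `Φ⁻¹((y+1)/2)` for
`y ∈ [1 − 1/√(2πe), 1)`: any `x` with `Φ x = (y+1)/2` satisfies
`x ≤ √(2 log(√2/(√π(1−y))))` and, provided the expression under the square root is
nonnegative, `x ≥ √(2 log(√2/(√π(1−y))) − log log(√2/(√π(1−y))) − 3 log 2)`. -/
theorem gaussian_quantile_bounds (y x : ℝ)
    (hy1 : 1 - 1 / Real.sqrt (2 * Real.pi * Real.exp 1) ≤ y) (hy2 : y < 1)
    (hx : stdGaussCDF x = (y + 1) / 2) :
    x ≤ Real.sqrt (2 * Real.log (Real.sqrt 2 / (Real.sqrt Real.pi * (1 - y)))) ∧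
    (0 ≤ 2 * Real.log (Real.sqrt 2 / (Real.sqrt Real.pi * (1 - y)))
          - Real.log (Real.log (Real.sqrt 2 / (Real.sqrt Real.pi * (1 - y))))
          - 3 * Real.log 2 →
      Real.sqrt (2 * Real.log (Real.sqrt 2 / (Real.sqrt Real.pi * (1 - y)))
          - Real.log (Real.log (Real.sqrt 2 / (Real.sqrt Real.pi * (1 - y))))
          - 3 * Real.log 2) ≤ x) := by
  have hr : 0 < 1 - y := by linarith
  have hL := log_two_add_half_le_log hr (by linarith)
  have hQ : stdGaussTail x = (√(2 * π))⁻¹ * exp (-log (√2 / (√π * (1 - y)))) := by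
    rw [exp_neg, exp_log (by positivity), sqrt_mul zero_le_two,
      eq_sub_of_add_eq' (stdGaussCDF_add_stdGaussTail x), hx]
    field_simp
    rw [sq_sqrt zero_le_two]
    ring
  exact ⟨le_sqrt_of_stdGaussTail_eq (by linarith [log_pos one_lt_two]) hQ,
    fun _ => sqrt_le_of_stdGaussTail_eq hL hQ⟩
end
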